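/- For all integers k ≥ 1 and n ≥ 1, the number of k-box paths of size n equals the number of (k+1)_k-Dyck paths of size n − 1. -/

import Mathlib

/-!
A word `u` over `{true, false}`, with weights `+1` and `-(k+1)`, is sent to the step word
`U^(k+1) (boxWord k u)`, where `boxWord k` replaces `true` by `U` and `false` by `D^k L D U` and
appends a final `D^k L`. Inside the block of a `false` the step word bottoms out exactly `k` above
the value of `u` after that `false`, and both walks end at the same height, so the image is a skew
Dyck path iff `u` is a `(k+1)_k`-Dyck path. Each `false` and the final `D^k L` give one factor
`U D^k L`, and for `k ≥ 1` no factor `UL` or `LU` appears.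

Conversely, in a word without factor `LU` every occurrence of `U D^k L` is followed by one more
non-`U` letter or by the end of the word, so `(k+2)·#occurrences ≤ #(D and L letters) + 1`.
A `k`-box path attains this bound, which forces it to be `U (boxWord k v)`; since its first `L`
stays weakly above the axis, `v` starts with `true^k`.
-/

/-- The step alphabet for skew Dyck paths: up, down, left. -/
inductive Step : Type
  | U | D | L
  deriving DecidableEq

/-- Number of U steps in a word. -/
def countU (w : List Step) : ℕ := w.count Step.U
/-- Number of D steps in a word. -/
def countD (w : List Step) : ℕ := w.count Step.D
/-- Number of L steps in a word. -/
def countL (w : List Step) : ℕ := w.count Step.L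

/-- A skew Dyck path: every prefix has at least as many U's as D's and L's combined,
the totals balance, and there is no factor `UL` or `LU`. -/
def IsSkewDyck (w : List Step) : Prop :=
  (∀ p, p <+: w → countD p + countL p ≤ countU p) ∧
  countU w = countD w + countL w ∧
  ¬ [Step.U, Step.L] <:+: w ∧ ¬ [Step.L, Step.U] <:+: w

/-- The semilength of a skew Dyck path is its number of U's. -/
def semilength (w : List Step) : ℕ := countU w

/-- The factor `U D^k L`. -/
def boxFactor (k : ℕ) : List Step := Step.U :: (List.replicate k Step.D ++ [Step.L])

/-- The number of occurrences (starting positions) of `f` as a factor (contiguous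
subword) of `w`. -/
def numOccurrences (f w : List Step) : ℕ :=
  ((Finset.range (w.length + 1)).filter (fun i => f <+: w.drop i)).card

/-- A `k`-box path of size `n`: a skew Dyck path of semilength `(k+2)n - 1` with
exactly `n` occurrences of the factor `U D^k L`. -/
def IsBoxPath (k n : ℕ) (w : List Step) : Prop :=
  IsSkewDyck w ∧ semilength w = (k+2)*n - 1 ∧ numOccurrences (boxFactor k) w = n

/-- Number of returns: positions `i` such that the `(i+1)`-st letter is a `D` or `L`
and the prefix of length `i+1` is balanced (the path returns to the x-axis). -/
def numReturns (w : List Step) : ℕ :=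
  ((Finset.range w.length).filter (fun i =>
    (w[i]? = some Step.D ∨ w[i]? = some Step.L) ∧
    countU (w.take (i+1)) = countD (w.take (i+1)) + countL (w.take (i+1)))).card

/-- Number of long ascents: maximal runs of consecutive U's of length at least 2,
counted via their starting positions. -/
def numLongAscents (w : List Step) : ℕ :=
  ((Finset.range w.length).filter (fun i =>
    w[i]? = some Step.U ∧ w[i+1]? = some Step.U ∧
    (i = 0 ∨ w[i-1]? ≠ some Step.U))).card

/-- The word `U^{a_1} D^k L D U^{a_2} D^k L D ⋯ U^{a_{n-1}} D^k L D U^{a_n} D^k L`. -/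
def boxForm (k : ℕ) : List ℕ → List Step
  | [] => []
  | [a] => List.replicate a Step.U ++ List.replicate k Step.D ++ [Step.L]
  | a :: b :: rest =>
      List.replicate a Step.U ++ List.replicate k Step.D ++ [Step.L, Step.D] ++
        boxForm k (b :: rest)

/-- A block `U^b D^{k-1} L D` of an augmented `k`-Dyck path. -/
def augBlock (k b : ℕ) : List Step :=
  List.replicate b Step.U ++ List.replicate (k-1) Step.D ++ [Step.L, Step.D]

/-- The word `U^{b_1} D^{k-1} L D ⋯ U^{b_m} D^{k-1} L D`. -/
def augForm (k : ℕ) (b : List ℕ) : List Step := (b.map (augBlock k)).flatten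

/-- An augmented `k`-Dyck path: a skew Dyck path of the form
`U^{b_1} D^{k-1} L D ⋯ U^{b_m} D^{k-1} L D` with all `b_i` positive. -/
def IsAugmented (k : ℕ) (w : List Step) : Prop :=
  IsSkewDyck w ∧ ∃ b : List ℕ, (∀ x ∈ b, 0 < x) ∧ w = augForm k b

/-- An augmented `k`-Dyck path of size `m`. -/
def IsAugmentedOfSize (k m : ℕ) (w : List Step) : Prop :=
  IsSkewDyck w ∧ ∃ b : List ℕ, b.length = m ∧ (∀ x ∈ b, 0 < x) ∧ w = augForm k b

/-- A tailed `k`-box path ends with the factor `U^{k+1} D^k L`. -/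
def Tailed (k : ℕ) (w : List Step) : Prop :=
  (List.replicate (k+1) Step.U ++ List.replicate k Step.D ++ [Step.L]) <:+ w

/-- A `K_t`-Dyck path of size `m`: a word with `K·m` up steps (`true`, value `+1`)
and `m` down steps (`false`, value `-K`) such that every partial sum is at
least `-t`. -/
def IsKtDyck (K t m : ℕ) (w : List Bool) : Prop :=
  w.count true = K * m ∧ w.count false = m ∧
  ∀ p, p <+: w → -(t : ℤ) ≤ (p.count true : ℤ) - (K : ℤ) * (p.count false : ℤ)

section PrefixSums

variable {α : Type*} {f : α → ℤ} {t : ℤ} {a : α} {l l₁ l₂ : List α}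

variable (f) in
def PrefixSumsGE (t : ℤ) (l : List α) : Prop := ∀ p, p <+: l → t ≤ (p.map f).sum

theorem PrefixSumsGE.nonpos (h : PrefixSumsGE f t l) : t ≤ 0 := by
  simpa using h [] List.nil_prefix

theorem PrefixSumsGE.mono {s : ℤ} (h : PrefixSumsGE f t l) (hst : s ≤ t) :
    PrefixSumsGE f s l :=
  fun p hp => hst.trans (h p hp)

@[simp]
theorem prefixSumsGE_nil : PrefixSumsGE f t [] ↔ t ≤ 0 := by
  simp [PrefixSumsGE]

@[simp]
theorem prefixSumsGE_cons :
    PrefixSumsGE f t (a :: l) ↔ t ≤ 0 ∧ PrefixSumsGE f (t - f a) l := by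
  constructor
  · intro h
    refine ⟨h.nonpos, fun p hp => ?_⟩
    have := h (a :: p) (List.cons_prefix_cons.2 ⟨rfl, hp⟩)
    simp only [List.map_cons, List.sum_cons] at this
    linarith
  · rintro ⟨h0, h⟩ p hp
    rcases List.prefix_cons_iff.1 hp with rfl | ⟨q, rfl, hq⟩
    · simpa using h0
    · have := h q hq
      simp only [List.map_cons, List.sum_cons]
      linarith

theorem prefixSumsGE_append :
    PrefixSumsGE f t (l₁ ++ l₂) ↔
      PrefixSumsGE f t l₁ ∧ PrefixSumsGE f (t - (l₁.map f).sum) l₂ := by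
  induction l₁ generalizing t with
  | nil => simpa using fun h => h.nonpos
  | cons a l ih => simp [ih, sub_sub, and_assoc]

theorem prefixSumsGE_iff_nonpos_of_nonneg (hl : ∀ a ∈ l, 0 ≤ f a) :
    PrefixSumsGE f t l ↔ t ≤ 0 := by
  induction l generalizing t with
  | nil => simp
  | cons a l ih =>
    rw [prefixSumsGE_cons, ih fun b hb => hl b (List.mem_cons_of_mem a hb)]
    have := hl a List.mem_cons_self
    constructor <;> intro h <;> [exact h.1; exact ⟨h, by linarith⟩]

theorem prefixSumsGE_iff_le_sum_of_nonpos (hl : ∀ a ∈ l, f a ≤ 0) :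
    PrefixSumsGE f t l ↔ t ≤ (l.map f).sum := by
  induction l generalizing t with
  | nil => simp
  | cons a l ih =>
    rw [prefixSumsGE_cons, ih fun b hb => hl b (List.mem_cons_of_mem a hb), List.map_cons,
      List.sum_cons]
    have ha := hl a List.mem_cons_self
    have hsum : (l.map f).sum ≤ 0 := by
      simpa using List.sum_le_card_nsmul (l.map f) 0 (by
        simpa using fun b hb => hl b (List.mem_cons_of_mem a hb))
    constructor <;> intro h <;> [linarith [h.2]; exact ⟨by linarith, by linarith⟩]

end PrefixSums

section Weights

def stepWeight : Step → ℤ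
  | .U => 1
  | .D => -1
  | .L => -1

def boolWeight (K : ℕ) : Bool → ℤ
  | true => 1
  | false => -K

theorem sum_map_stepWeight (l : List Step) :
    (l.map stepWeight).sum = countU l - (countD l + countL l) := by
  induction l with
  | nil => simp [countU, countD, countL]
  | cons a l ih =>
    cases a <;> simp [countU, countD, countL, stepWeight] at ih ⊢ <;> omega

theorem sum_map_boolWeight (K : ℕ) (l : List Bool) :
    (l.map (boolWeight K)).sum = l.count true - K * l.count false := by
  induction l with
  | nil => simp
  | cons b l ih => cases b <;> simp [boolWeight, ih] <;> ring

theorem isSkewDyck_iff {w : List Step} :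
    IsSkewDyck w ↔ PrefixSumsGE stepWeight 0 w ∧ (w.map stepWeight).sum = 0 ∧
      ¬ [Step.U, Step.L] <:+: w ∧ ¬ [Step.L, Step.U] <:+: w := by
  simp only [IsSkewDyck, PrefixSumsGE, sum_map_stepWeight]
  refine and_congr (forall₂_congr fun _ _ => ?_) (and_congr ?_ Iff.rfl) <;> omega

theorem isKtDyck_iff {K t m : ℕ} {w : List Bool} :
    IsKtDyck K t m w ↔ w.count false = m ∧ (w.map (boolWeight K)).sum = 0 ∧
      PrefixSumsGE (boolWeight K) (-t) w := by
  simp only [IsKtDyck, PrefixSumsGE, sum_map_boolWeight]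
  constructor
  · rintro ⟨ht, hf, hp⟩
    exact ⟨hf, by rw [ht, hf]; push_cast; ring, hp⟩
  · rintro ⟨hf, hs, hp⟩
    subst hf
    exact ⟨by exact_mod_cast (by linarith : (w.count true : ℤ) = K * w.count false), rfl, hp⟩

theorem prefixSumsGE_replicate_D {j : ℕ} {t : ℤ} :
    PrefixSumsGE stepWeight t (List.replicate j Step.D) ↔ t ≤ -j := by
  rw [prefixSumsGE_iff_le_sum_of_nonpos (by simp [stepWeight])]
  simp [stepWeight]

theorem eq_replicate_true_append_of_prefixSumsGE {K j : ℕ} {h : ℤ} {v : List Bool}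
    (hK : h + j ≤ K) (hv : PrefixSumsGE (boolWeight K) (-h) v)
    (hsum : j ≤ (v.map (boolWeight K)).sum) : ∃ u, v = List.replicate j true ++ u := by
  induction j generalizing h v with
  | zero => exact ⟨v, rfl⟩
  | succ j ih =>
    rcases v with _ | ⟨_ | _, v⟩
    · simp at hsum
      omega
    · have := (prefixSumsGE_cons.1 hv).2.nonpos
      simp only [boolWeight] at this
      push_cast at hK
      linarith
    · simp only [List.map_cons, List.sum_cons, boolWeight] at hsum
      obtain ⟨u, rfl⟩ := ih (h := h + 1) (by push_cast at hK ⊢; linarith)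
        ((prefixSumsGE_cons.1 hv).2.mono (by simp [boolWeight])) (by push_cast at hsum; linarith)
      exact ⟨u, rfl⟩

end Weights

section Occurrences

variable {k : ℕ} {c : Step} {x : List Step}

theorem numOccurrences_cons (f : List Step) (a : Step) (w : List Step) :
    numOccurrences f (a :: w) = numOccurrences f w + if f <+: a :: w then 1 else 0 := by
  simp only [numOccurrences, Finset.card_filter, List.length_cons, Finset.sum_range_succ',
    List.drop_succ_cons, List.drop_zero]

@[simp]
theorem numOccurrences_boxFactor_nil : numOccurrences (boxFactor k) [] = 0 := by
  simp [numOccurrences, boxFactor]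

theorem numOccurrences_boxFactor_cons_of_ne (hc : c ≠ Step.U) :
    numOccurrences (boxFactor k) (c :: x) = numOccurrences (boxFactor k) x := by
  rw [numOccurrences_cons, if_neg]
  · rfl
  · simp [boxFactor, Ne.symm hc]

theorem numOccurrences_boxFactor_replicate_append (j : ℕ) :
    numOccurrences (boxFactor k) (List.replicate j Step.D ++ x) =
      numOccurrences (boxFactor k) x := by
  induction j with
  | zero => rfl
  | succ j ih =>
    rw [List.replicate_succ, List.cons_append, numOccurrences_boxFactor_cons_of_ne (by decide), ih]

theorem numOccurrences_boxFactor_append :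
    numOccurrences (boxFactor k) (boxFactor k ++ x) = numOccurrences (boxFactor k) x + 1 := by
  have h : boxFactor k <+: Step.U :: (List.replicate k Step.D ++ [Step.L] ++ x) :=
    List.prefix_append _ _
  show numOccurrences (boxFactor k) (Step.U :: (List.replicate k Step.D ++ [Step.L] ++ x)) = _
  rw [numOccurrences_cons, if_pos h, List.append_assoc, numOccurrences_boxFactor_replicate_append,
    List.singleton_append, numOccurrences_boxFactor_cons_of_ne (by decide)]

theorem numOccurrences_boxFactor_U_cons_U_cons :
    numOccurrences (boxFactor k) (Step.U :: Step.U :: x) =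
      numOccurrences (boxFactor k) (Step.U :: x) := by
  rw [numOccurrences_cons, if_neg]
  · rfl
  · cases k <;> simp [boxFactor, List.replicate_succ]

end Occurrences

section BoxWord

def boxWord (k : ℕ) : List Bool → List Step
  | [] => List.replicate k Step.D ++ [Step.L]
  | true :: v => Step.U :: boxWord k v
  | false :: v => List.replicate k Step.D ++ Step.L :: Step.D :: Step.U :: boxWord k v

variable {k : ℕ} {v : List Bool}

theorem prefixSumsGE_boxWord_iff {t : ℤ} (ht : t < 0) :
    PrefixSumsGE stepWeight t (boxWord k v) ↔
      PrefixSumsGE (boolWeight (k + 1)) (t + 1) v ∧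
        t + (k + 1) ≤ (v.map (boolWeight (k + 1))).sum := by
  induction v generalizing t with
  | nil =>
    simp only [boxWord, prefixSumsGE_append, prefixSumsGE_replicate_D]
    simp [stepWeight]
    omega
  | cons b v ih =>
    cases b
    · simp only [boxWord, prefixSumsGE_append, prefixSumsGE_replicate_D, prefixSumsGE_cons,
        List.map_cons, List.sum_cons, List.map_replicate, List.sum_replicate, stepWeight,
        boolWeight, nsmul_eq_mul, mul_neg, mul_one]
      push_cast
      constructor
      · rintro ⟨-, -, -, h, hw⟩
        obtain ⟨hv, hs⟩ := (ih (by linarith)).1 hw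
        exact ⟨⟨by linarith, hv.mono (by linarith)⟩, by linarith⟩
      · rintro ⟨⟨-, hv⟩, hs⟩
        have := hv.nonpos
        exact ⟨by linarith, by linarith, by linarith, by linarith,
          (ih (by linarith)).2 ⟨hv.mono (by linarith), by linarith⟩⟩
    · simp only [boxWord, prefixSumsGE_cons, List.map_cons, List.sum_cons, stepWeight, boolWeight]
      rw [ih (by linarith)]
      constructor
      · rintro ⟨-, hv, hs⟩
        exact ⟨⟨by linarith, hv.mono (by linarith)⟩, by linarith⟩
      · rintro ⟨⟨h, hv⟩, hs⟩
        exact ⟨by linarith, hv.mono (by linarith), by linarith⟩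

theorem countU_boxWord : countU (boxWord k v) = v.length := by
  induction v with
  | nil => simp [boxWord, countU, List.count_replicate]
  | cons b v ih => cases b <;> simp [boxWord, countU, List.count_replicate] at ih ⊢ <;> omega

theorem sum_map_stepWeight_boxWord :
    ((boxWord k v).map stepWeight).sum = (v.map (boolWeight (k + 1))).sum - (k + 1) := by
  induction v with
  | nil => simp [boxWord, stepWeight]; ring
  | cons b v ih => cases b <;> simp [boxWord, stepWeight, boolWeight, ih] <;> ring

theorem U_cons_boxWord_false_cons :
    Step.U :: boxWord k (false :: v) = boxFactor k ++ Step.D :: Step.U :: boxWord k v := by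
  simp [boxWord, boxFactor]

theorem numOccurrences_U_cons_boxWord :
    numOccurrences (boxFactor k) (Step.U :: boxWord k v) = v.count false + 1 := by
  induction v with
  | nil =>
    show numOccurrences (boxFactor k) (boxFactor k) = 0 + 1
    simpa using numOccurrences_boxFactor_append (k := k) (x := [])
  | cons b v ih =>
    cases b
    · rw [U_cons_boxWord_false_cons, numOccurrences_boxFactor_append,
        numOccurrences_boxFactor_cons_of_ne (by decide), ih, List.count_cons_self]
    · rw [boxWord, numOccurrences_boxFactor_U_cons_U_cons, ih]
      simp

def NoSkewTurn (a b : Step) : Prop :=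
  ¬(a = Step.U ∧ b = Step.L) ∧ ¬(a = Step.L ∧ b = Step.U)

theorem isChain_replicate_D_append {j : ℕ} {l : List Step} (h : List.IsChain NoSkewTurn l) :
    List.IsChain NoSkewTurn (List.replicate j Step.D ++ l) := by
  induction j with
  | zero => exact h
  | succ j ih => exact ih.cons fun _ _ => by simp [NoSkewTurn]

theorem isChain_U_cons_replicate_D_append {j : ℕ} {l : List Step} (hj : j ≠ 0)
    (h : List.IsChain NoSkewTurn l) :
    List.IsChain NoSkewTurn (Step.U :: (List.replicate j Step.D ++ l)) := by
  obtain ⟨j, rfl⟩ := Nat.exists_eq_succ_of_ne_zero hj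
  exact (isChain_replicate_D_append h).cons (by simp [List.replicate_succ, NoSkewTurn])

theorem isChain_U_cons_boxWord (hk : k ≠ 0) :
    List.IsChain NoSkewTurn (Step.U :: boxWord k v) := by
  induction v with
  | nil => exact isChain_U_cons_replicate_D_append hk (List.isChain_singleton _)
  | cons b v ih =>
    cases b
    · exact isChain_U_cons_replicate_D_append hk <| List.isChain_cons_cons.2
        ⟨by simp [NoSkewTurn], List.isChain_cons_cons.2 ⟨by simp [NoSkewTurn], ih⟩⟩
    · exact List.isChain_cons_cons.2 ⟨by simp [NoSkewTurn], ih⟩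

theorem not_infix_of_isChain {l : List Step} {a b : Step} (h : List.IsChain NoSkewTurn l)
    (hab : ¬NoSkewTurn a b) : ¬[a, b] <:+: l :=
  fun hl => hab (List.isChain_pair.1 (h.infix hl))

theorem head?_boxWord_eq_U : (boxWord k v).head? = some Step.U ↔ v.head? = some true := by
  rcases v with _ | ⟨_ | _, v⟩ <;> cases k <;> simp [boxWord, List.replicate_succ]

theorem boxWord_injective : Function.Injective (boxWord k) := by
  have head_iff {v v'} (h : boxWord k v = boxWord k v') :
      v.head? = some true ↔ v'.head? = some true := by
    rw [← head?_boxWord_eq_U, h, head?_boxWord_eq_U]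
  intro v v' h
  induction v generalizing v' with
  | nil => have := head_iff h; rcases v' with _ | ⟨_ | _, v'⟩ <;> simp_all [boxWord]
  | cons b v ih =>
    have := head_iff h
    rcases v' with _ | ⟨b', v'⟩
    · cases b <;> simp_all [boxWord]
    · obtain rfl : b = b' := by cases b <;> cases b' <;> simp_all
      exact congrArg _ (ih (by cases b <;> simpa [boxWord] using h))

end BoxWord

section TightWords

variable {k : ℕ}

theorem countD_add_countL_boxFactor_append (x : List Step) :
    countD (boxFactor k ++ x) + countL (boxFactor k ++ x) = countD x + countL x + (k + 1) := by
  simp [boxFactor, countD, countL, List.count_replicate]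
  omega

theorem infix_L_U_boxFactor_append_U_cons (x : List Step) :
    [Step.L, Step.U] <:+: boxFactor k ++ Step.U :: x :=
  ⟨Step.U :: List.replicate k Step.D, x, by simp [boxFactor]⟩

theorem mul_numOccurrences_boxFactor_le (w : List Step) (hLU : ¬[Step.L, Step.U] <:+: w) :
    (k + 2) * numOccurrences (boxFactor k) w ≤ countD w + countL w + 1 := by
  induction hlen : w.length using Nat.strong_induction_on generalizing w with
  | _ n ih =>
  subst hlen
  by_cases hbox : boxFactor k <+: w
  · obtain ⟨rest, rfl⟩ := hbox
    rw [numOccurrences_boxFactor_append, countD_add_countL_boxFactor_append]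
    rcases rest with _ | ⟨c, r⟩
    · simp [countD, countL]
    · have hc : c ≠ Step.U := by
        rintro rfl
        exact hLU (infix_L_U_boxFactor_append_U_cons r)
      have := ih r.length (by simp [boxFactor]; omega) r
        (mt (·.trans ((List.suffix_cons c r).trans (List.suffix_append _ _)).isInfix) hLU) rfl
      rw [numOccurrences_boxFactor_cons_of_ne hc]
      cases c <;> simp [countD, countL] at hc this ⊢ <;> linarith
  · rcases w with _ | ⟨c, x⟩
    · simp
    · have := ih x.length (by simp) x (mt (·.trans (List.suffix_cons c x).isInfix) hLU) rfl
      rw [numOccurrences_cons, if_neg hbox, add_zero]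
      cases c <;> simp [countD, countL] at this ⊢ <;> omega

theorem exists_eq_U_cons_boxWord (w : List Step) (hLU : ¬[Step.L, Step.U] <:+: w)
    (heq : (k + 2) * numOccurrences (boxFactor k) w = countD w + countL w + 1) :
    ∃ v, w = Step.U :: boxWord k v := by
  induction hlen : w.length using Nat.strong_induction_on generalizing w with
  | _ n ih =>
  subst hlen
  by_cases hbox : boxFactor k <+: w
  · obtain ⟨rest, rfl⟩ := hbox
    rw [numOccurrences_boxFactor_append, countD_add_countL_boxFactor_append] at heq
    rcases rest with _ | ⟨c, r⟩
    · exact ⟨[], by simp [boxFactor, boxWord]⟩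
    · have hc : c ≠ Step.U := by
        rintro rfl
        exact hLU (infix_L_U_boxFactor_append_U_cons r)
      rw [numOccurrences_boxFactor_cons_of_ne hc] at heq
      obtain ⟨v, rfl⟩ := ih r.length (by simp [boxFactor]; omega) r
        (mt (·.trans ((List.suffix_cons c r).trans (List.suffix_append _ _)).isInfix) hLU)
        (by cases c <;> simp [countD, countL] at hc heq ⊢ <;> linarith) rfl
      cases c
      · exact absurd rfl hc
      · exact ⟨false :: v, U_cons_boxWord_false_cons.symm⟩
      · exact absurd ⟨boxFactor k, boxWord k v, by simp⟩ hLU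
  · rcases w with _ | ⟨c, x⟩
    · simp at heq
    · have hLUx : ¬[Step.L, Step.U] <:+: x := mt (·.trans (List.suffix_cons c x).isInfix) hLU
      rw [numOccurrences_cons, if_neg hbox, add_zero] at heq
      have hle := mul_numOccurrences_boxFactor_le (k := k) x hLUx
      cases c
      · obtain ⟨v, rfl⟩ :=
          ih x.length (by simp) x hLUx (by simpa [countD, countL] using heq) rfl
        exact ⟨true :: v, rfl⟩
      all_goals simp [countD, countL] at heq hle; omega

end TightWords

section BoxPath

variable {k n : ℕ} {u : List Bool} {w : List Step}

def toBoxPath (k : ℕ) (u : List Bool) : List Step :=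
  Step.U :: boxWord k (List.replicate k true ++ u)

theorem toBoxPath_injective : Function.Injective (toBoxPath k) :=
  fun _ _ h => List.append_cancel_left (boxWord_injective (List.cons.inj h).2)

theorem countU_toBoxPath : countU (toBoxPath k u) = u.length + k + 1 := by
  have := countU_boxWord (k := k) (v := List.replicate k true ++ u)
  simp only [countU, toBoxPath, List.count_cons_self, List.length_append,
    List.length_replicate] at this ⊢
  omega

theorem numOccurrences_toBoxPath :
    numOccurrences (boxFactor k) (toBoxPath k u) = u.count false + 1 := by
  simp [toBoxPath, numOccurrences_U_cons_boxWord, List.count_replicate]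

theorem sum_map_stepWeight_toBoxPath :
    ((toBoxPath k u).map stepWeight).sum = (u.map (boolWeight (k + 1))).sum := by
  simp [toBoxPath, stepWeight, sum_map_stepWeight_boxWord, boolWeight]

theorem prefixSumsGE_toBoxPath_iff :
    PrefixSumsGE stepWeight 0 (toBoxPath k u) ↔
      PrefixSumsGE (boolWeight (k + 1)) (-k) u ∧ 0 ≤ (u.map (boolWeight (k + 1))).sum := by
  rw [toBoxPath, prefixSumsGE_cons, prefixSumsGE_boxWord_iff (by simp [stepWeight]),
    prefixSumsGE_append, prefixSumsGE_iff_nonpos_of_nonneg (by simp [boolWeight])]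
  simp [stepWeight, boolWeight]

theorem isBoxPath_toBoxPath (hk : k ≠ 0) (hn : 1 ≤ n) (hu : IsKtDyck (k + 1) k (n - 1) u) :
    IsBoxPath k n (toBoxPath k u) := by
  obtain ⟨hfalse, hsum, hpre⟩ := isKtDyck_iff.1 hu
  have hchain : List.IsChain NoSkewTurn (toBoxPath k u) := isChain_U_cons_boxWord hk
  refine ⟨isSkewDyck_iff.2 ⟨prefixSumsGE_toBoxPath_iff.2 ⟨hpre, hsum.ge⟩,
    sum_map_stepWeight_toBoxPath.trans hsum, not_infix_of_isChain hchain (by simp [NoSkewTurn]),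
    not_infix_of_isChain hchain (by simp [NoSkewTurn])⟩, ?_, ?_⟩
  · obtain ⟨m, rfl⟩ : ∃ m, n = m + 1 := ⟨n - 1, by omega⟩
    rw [Nat.add_sub_cancel] at hfalse
    have htrue : u.count true = (k + 1) * m := by
      rw [sum_map_boolWeight, hfalse] at hsum
      push_cast at hsum
      exact_mod_cast (by linarith : (u.count true : ℤ) = (k + 1) * m)
    rw [semilength, countU_toBoxPath, ← List.count_true_add_count_false, htrue, hfalse]
    ring_nf
    omega
  · rw [numOccurrences_toBoxPath, hfalse]
    omega

theorem exists_toBoxPath_eq (hn : 1 ≤ n) (hw : IsBoxPath k n w) :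
    ∃ u, IsKtDyck (k + 1) k (n - 1) u ∧ toBoxPath k u = w := by
  obtain ⟨hsd, hsemi, hocc⟩ := hw
  obtain ⟨hpre, hbal, -, hLU⟩ := isSkewDyck_iff.1 hsd
  have hnonU : (k + 2) * numOccurrences (boxFactor k) w = countD w + countL w + 1 := by
    have := sum_map_stepWeight w
    have : 1 ≤ (k + 2) * n := Nat.mul_pos (by omega) hn
    rw [semilength] at hsemi
    rw [hocc]
    omega
  obtain ⟨v, rfl⟩ := exists_eq_U_cons_boxWord w hLU hnonU
  obtain ⟨u, rfl⟩ : ∃ u, v = List.replicate k true ++ u := by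
    have hv := hpre
    rw [prefixSumsGE_cons, prefixSumsGE_boxWord_iff (by simp [stepWeight])] at hv
    simp only [stepWeight] at hv
    exact eq_replicate_true_append_of_prefixSumsGE (h := 0) (by simp) (hv.2.1.mono (by norm_num))
      (by linarith [hv.2.2])
  refine ⟨u, isKtDyck_iff.2 ⟨?_, ?_, (prefixSumsGE_toBoxPath_iff.1 hpre).1⟩, rfl⟩
  · have := hocc.symm.trans numOccurrences_toBoxPath
    omega
  · exact sum_map_stepWeight_toBoxPath.symm.trans hbal

end BoxPath

/-- The number of `k`-box paths of size `n` equals the number of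
`(k+1)_k`-Dyck paths of size `n-1`. -/
theorem statement6 (k n : ℕ) (hk : 1 ≤ k) (hn : 1 ≤ n) :
    Nat.card {w : List Step // IsBoxPath k n w} =
    Nat.card {w : List Bool // IsKtDyck (k+1) k (n-1) w} := by
  refine (Nat.card_congr (Equiv.ofBijective
    (fun u => ⟨toBoxPath k u.1, isBoxPath_toBoxPath (by omega) hn u.2⟩) ⟨?_, ?_⟩)).symm
  · exact fun u u' h => Subtype.ext (toBoxPath_injective (congrArg Subtype.val h))
  · rintro ⟨w, hw⟩
    obtain ⟨u, hu, rfl⟩ := exists_toBoxPath_eq hn hw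
    exact ⟨⟨u, hu⟩, rfl⟩
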